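/- Let s, s' ∈ {0,1}^n be distinct strings, let η ∈ [0, 1/2], and let E ∈ {0,1}^n have independent coordinates each equal to 1 with probability η. Set T = s ⊕ E. Then Pr(d_H(T, s') < d_H(T, s)) + (1/2)·Pr(d_H(T, s') = d_H(T, s)) ≤ η. (That is, the probability that a noisy copy of s is mismatched to s', counting ties with weight one half, is at most the bit-flip rate η.) -/

import Mathlib

open Finset

/-- The probability assigned to an error string `e` when each of the `n` bits is
flipped independently with probability `η`. -/
noncomputable def errProb (n : ℕ) (η : ℝ) (e : Fin n → ZMod 2) : ℝ :=
  η ^ (hammingNorm e) * (1 - η) ^ (n - hammingNorm e)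

lemma zmod2_ne_zero_iff (x : ZMod 2) : x ≠ 0 ↔ x = 1 := by revert x; decide

lemma zmod2_add_one_ne_zero_iff (x : ZMod 2) : x + 1 ≠ 0 ↔ ¬ x ≠ 0 := by revert x; decide

lemma sum_zmod2 (f : ZMod 2 → ℝ) : ∑ x : ZMod 2, f x = f 0 + f 1 := by
  rw [show (univ : Finset (ZMod 2)) = {0, 1} from by decide,
    Finset.sum_insert (by decide), Finset.sum_singleton]

lemma errProb_eq_prod (n : ℕ) (η : ℝ) (e : Fin n → ZMod 2) :
    errProb n η e = ∏ i, (if e i = 1 then η else 1 - η) := by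
  rw [Finset.prod_ite, Finset.prod_const, Finset.prod_const, errProb]
  have hcard : (univ.filter fun i => e i = 1).card = hammingNorm e := by
    simp only [hammingNorm, zmod2_ne_zero_iff]
  have hcard2 : (univ.filter fun i => ¬ e i = 1).card = n - hammingNorm e := by
    have := Finset.card_filter_add_card_filter_not (s := univ)
      (p := fun i : Fin n => e i = 1)
    simp only [Finset.card_univ, Fintype.card_fin] at this
    omega
  rw [hcard, hcard2]

lemma errProb_antitone {η : ℝ} (hη0 : 0 ≤ η) (hη2 : η ≤ 1 / 2) {n a b : ℕ}
    (hab : b ≤ a) (han : a ≤ n) :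
    η ^ a * (1 - η) ^ (n - a) ≤ η ^ b * (1 - η) ^ (n - b) := by
  have h1 : (0:ℝ) ≤ 1 - η := by linarith
  have hle : η ≤ 1 - η := by linarith
  have hab' : b + (a - b) = a := by omega
  have hab'' : (a - b) + (n - a) = n - b := by omega
  calc η ^ a * (1 - η) ^ (n - a) = η ^ b * η ^ (a - b) * (1 - η) ^ (n - a) := by
        rw [← pow_add, hab']
    _ ≤ η ^ b * (1 - η) ^ (a - b) * (1 - η) ^ (n - a) := by
        apply mul_le_mul_of_nonneg_right _ (by positivity)
        exact mul_le_mul_of_nonneg_left (pow_le_pow_left₀ hη0 hle _) (by positivity)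
    _ = η ^ b * (1 - η) ^ (n - b) := by
        rw [mul_assoc, ← pow_add, hab'']

lemma sum_errProb_indicator {n : ℕ} {η : ℝ} (i0 : Fin n) :
    ∑ e : Fin n → ZMod 2, (if e i0 = 1 then (1:ℝ) else 0) * errProb n η e = η := by
  set G : Fin n → ZMod 2 → ℝ := fun i x =>
    if i = i0 then (if x = 1 then η else 0) else (if x = 1 then η else 1 - η) with hG
  have key : ∀ e : Fin n → ZMod 2, (if e i0 = 1 then (1:ℝ) else 0) * errProb n η e
      = ∏ i, G i (e i) := by
    intro e
    rw [errProb_eq_prod,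
      ← Finset.mul_prod_erase univ (fun i => G i (e i)) (Finset.mem_univ i0),
      ← Finset.mul_prod_erase univ (fun i => if e i = 1 then η else 1 - η)
        (Finset.mem_univ i0), ← mul_assoc]
    congr 1
    · by_cases h : e i0 = 1 <;> simp [hG, h]
    · apply Finset.prod_congr rfl
      intro i hi
      simp [hG, Finset.ne_of_mem_erase hi]
  rw [Finset.sum_congr rfl fun e _ => key e, ← Fintype.prod_sum G]
  have hfac : ∀ i : Fin n, (∑ x : ZMod 2, G i x) = if i = i0 then η else 1 := by
    intro i
    rw [sum_zmod2]
    by_cases h : i = i0 <;> simp [hG, h]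
  rw [Finset.prod_congr rfl fun i _ => hfac i, Finset.prod_ite_eq' univ i0 fun _ => η]
  simp

/-- For distinct `s, s'` and `T = s ⊕ E` with `E` having independent Bernoulli(η)
coordinates (`η ≤ 1/2`), the probability that `T` is strictly closer to `s'` than to
`s`, plus half the probability of a tie, is at most `η`. -/
theorem mismatch_prob_le_eta (n : ℕ) (s s' : Fin n → ZMod 2) (hss' : s ≠ s')
    (η : ℝ) (hη : η ∈ Set.Icc (0 : ℝ) (1 / 2)) :
    (∑ e ∈ univ.filter (fun e : Fin n → ZMod 2 =>
        hammingDist (s + e) s' < hammingDist (s + e) s), errProb n η e) +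
      (1 / 2) * (∑ e ∈ univ.filter (fun e : Fin n → ZMod 2 =>
        hammingDist (s + e) s' = hammingDist (s + e) s), errProb n η e) ≤ η := by
  obtain ⟨hη0, hη2⟩ := hη
  set D : Finset (Fin n) := univ.filter (fun i => s i ≠ s' i) with hD
  set d : ℕ := D.card with hd
  set u : Fin n → ZMod 2 := s - s' with hu
  have hu_mem : ∀ i, i ∈ D ↔ u i ≠ 0 := by
    intro i; simp [hD, hu, sub_ne_zero]
  have hd_pos : 0 < d := by
    rcases Function.ne_iff.mp hss' with ⟨i, hi⟩
    exact Finset.card_pos.mpr ⟨i, by simp [hD, hi]⟩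
  set k : (Fin n → ZMod 2) → ℕ := fun e => (D.filter fun i => e i ≠ 0).card with hk
  set m : (Fin n → ZMod 2) → ℕ := fun e => (Dᶜ.filter fun i => e i ≠ 0).card with hm
  set F : (Fin n → ZMod 2) → ℝ := fun e => errProb n η e with hF
  -- basic facts
  have hkd : ∀ e, k e ≤ d := fun e => Finset.card_le_card (Finset.filter_subset _ _)
  have hnorm : ∀ e : Fin n → ZMod 2, hammingNorm e = k e + m e := by
    intro e
    have : (univ : Finset (Fin n)).filter (fun i => e i ≠ 0)
        = (D.filter fun i => e i ≠ 0) ∪ (Dᶜ.filter fun i => e i ≠ 0) := by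
      rw [← Finset.filter_union, Finset.union_compl]
    rw [hammingNorm, this, Finset.card_union_of_disjoint]
    exact Finset.disjoint_filter_filter disjoint_compl_right
  have hnorm_u : ∀ e : Fin n → ZMod 2, hammingNorm (e + u) = (d - k e) + m e := by
    intro e
    have h1 : (D.filter fun i => (e + u) i ≠ 0) = D.filter fun i => ¬ e i ≠ 0 := by
      apply Finset.filter_congr
      intro i hi
      have hui : u i = 1 := by
        have := (hu_mem i).mp hi
        rcases (zmod2_ne_zero_iff (u i)).mp this with h; simp [h]
      simp only [Pi.add_apply, hui, eq_iff_iff]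
      exact zmod2_add_one_ne_zero_iff (e i)
    have h2 : (Dᶜ.filter fun i => (e + u) i ≠ 0) = Dᶜ.filter fun i => e i ≠ 0 := by
      apply Finset.filter_congr
      intro i hi
      have hui : u i = 0 := by
        by_contra h
        exact (Finset.mem_compl.mp hi) ((hu_mem i).mpr h)
      simp [hui]
    have hsplit : (univ : Finset (Fin n)).filter (fun i => (e + u) i ≠ 0)
        = (D.filter fun i => (e + u) i ≠ 0) ∪ (Dᶜ.filter fun i => (e + u) i ≠ 0) := by
      rw [← Finset.filter_union, Finset.union_compl]
    rw [hammingNorm, hsplit, Finset.card_union_of_disjoint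
      (Finset.disjoint_filter_filter disjoint_compl_right), h1, h2]
    congr 1
    rw [Finset.filter_not, Finset.card_sdiff_of_subset (Finset.filter_subset _ _)]
  have hk_u : ∀ e, k (e + u) = d - k e := by
    intro e
    have h1 : (D.filter fun i => (e + u) i ≠ 0) = D.filter fun i => ¬ e i ≠ 0 := by
      apply Finset.filter_congr
      intro i hi
      have hui : u i = 1 := (zmod2_ne_zero_iff (u i)).mp ((hu_mem i).mp hi)
      simp only [Pi.add_apply, hui, eq_iff_iff]
      exact zmod2_add_one_ne_zero_iff (e i)
    show (D.filter fun i => (e + u) i ≠ 0).card = d - k e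
    rw [h1, Finset.filter_not, Finset.card_sdiff_of_subset (Finset.filter_subset _ _)]
  have hdist_s : ∀ e : Fin n → ZMod 2, hammingDist (s + e) s = hammingNorm e := by
    intro e
    rw [hammingDist_eq_hammingNorm]
    congr 1; ext i; simp only [Pi.sub_apply, Pi.add_apply, Pi.neg_apply]
    generalize s i = a; generalize e i = b; revert a b; decide
  have hdist_s' : ∀ e : Fin n → ZMod 2, hammingDist (s + e) s' = hammingNorm (e + u) := by
    intro e
    rw [hammingDist_eq_hammingNorm]
    congr 1
    rw [hu]; ext i; simp only [Pi.sub_apply, Pi.add_apply, Pi.neg_apply]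
    generalize s i = a; generalize s' i = b; generalize e i = c; revert a b c; decide
  -- the weight function
  set φ : (Fin n → ZMod 2) → ℝ := fun e =>
    (if hammingDist (s + e) s' < hammingDist (s + e) s then (1:ℝ) else 0)
      + (1 / 2) * (if hammingDist (s + e) s' = hammingDist (s + e) s then (1:ℝ) else 0)
    with hφ
  have hφ_eq : ∀ e, φ e = (if d < 2 * k e then (1:ℝ) else if d = 2 * k e then 1/2 else 0) := by
    intro e
    have h1 : hammingDist (s + e) s' < hammingDist (s + e) s ↔ d < 2 * k e := by
      rw [hdist_s, hdist_s', hnorm_u, hnorm]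
      have := hkd e; omega
    have h2 : hammingDist (s + e) s' = hammingDist (s + e) s ↔ d = 2 * k e := by
      rw [hdist_s, hdist_s', hnorm_u, hnorm]
      have := hkd e; omega
    rw [hφ]
    simp only [h1, h2]
    split_ifs with ha hb hb
    · exact absurd hb (by omega)
    · ring
    · ring
    · ring
  -- rewrite LHS as a single sum
  have hLHS : (∑ e ∈ univ.filter (fun e : Fin n → ZMod 2 =>
        hammingDist (s + e) s' < hammingDist (s + e) s), errProb n η e) +
      (1 / 2) * (∑ e ∈ univ.filter (fun e : Fin n → ZMod 2 =>
        hammingDist (s + e) s' = hammingDist (s + e) s), errProb n η e)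
      = ∑ e : Fin n → ZMod 2, φ e * F e := by
    rw [Finset.sum_filter, Finset.sum_filter, Finset.mul_sum, ← Finset.sum_add_distrib]
    apply Finset.sum_congr rfl
    intro e _
    rw [hφ]
    by_cases h1 : hammingDist (s + e) s' < hammingDist (s + e) s <;>
      by_cases h2 : hammingDist (s + e) s' = hammingDist (s + e) s <;>
      simp [h1, h2, hF] <;> ring
  rw [hLHS]
  -- Step: ∑ k e * F e = d * η
  have hkF : ∑ e : Fin n → ZMod 2, (k e : ℝ) * F e = d * η := by
    have hkind : ∀ e : Fin n → ZMod 2, (k e : ℝ) = ∑ i ∈ D, (if e i = 1 then (1:ℝ) else 0) := by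
      intro e
      simp only [hk]
      rw [Finset.card_filter]
      push_cast
      apply Finset.sum_congr rfl
      intro i _
      simp [zmod2_ne_zero_iff]
    calc ∑ e : Fin n → ZMod 2, (k e : ℝ) * F e
        = ∑ e : Fin n → ZMod 2, ∑ i ∈ D, (if e i = 1 then (1:ℝ) else 0) * F e := by
          apply Finset.sum_congr rfl
          intro e _
          rw [hkind, Finset.sum_mul]
      _ = ∑ i ∈ D, ∑ e : Fin n → ZMod 2, (if e i = 1 then (1:ℝ) else 0) * F e :=
          Finset.sum_comm
      _ = ∑ i ∈ D, η := Finset.sum_congr rfl fun i _ => sum_errProb_indicator i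
      _ = d * η := by rw [Finset.sum_const, nsmul_eq_mul]
  -- Step: pairing inequality
  have hF_nonneg : ∀ e, 0 ≤ F e := by
    intro e
    apply mul_nonneg (pow_nonneg hη0 _) (pow_nonneg (by linarith) _)
  have hF_mono : ∀ e₁ e₂ : Fin n → ZMod 2, hammingNorm e₂ ≤ hammingNorm e₁ → F e₁ ≤ F e₂ := by
    intro e₁ e₂ h
    exact errProb_antitone hη0 hη2 h (le_trans hammingNorm_le_card_fintype (le_of_eq (Fintype.card_fin n)))
  set g : (Fin n → ZMod 2) → ℝ := fun e => (φ e - (k e : ℝ) / d) * F e with hg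
  have hpair : ∀ e : Fin n → ZMod 2, g e + g (e + u) ≤ 0 := by
    intro e
    have hkd1 := hkd e
    have hkue := hk_u e
    have hdR : (0:ℝ) < d := by exact_mod_cast hd_pos
    rcases lt_trichotomy d (2 * k e) with h | h | h
    · -- φ e = 1, φ (e+u) = 0
      have h1 : φ e = 1 := by rw [hφ_eq, if_pos h]
      have h2 : φ (e + u) = 0 := by
        rw [hφ_eq, hkue, if_neg (by omega), if_neg (by omega)]
      have hmono : F e ≤ F (e + u) := by
        apply hF_mono
        rw [hnorm_u, hnorm]
        omega
      have hc1 : 0 ≤ φ e - (k e : ℝ) / d := by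
        rw [h1]
        rw [sub_nonneg, div_le_one hdR]
        exact_mod_cast hkd1
      have hc2 : φ (e + u) - (k (e + u) : ℝ) / d = -(φ e - (k e : ℝ) / d) := by
        rw [h1, h2, hkue]
        have : ((d - k e : ℕ) : ℝ) = (d : ℝ) - k e := by
          push_cast [Nat.cast_sub hkd1]; ring
        rw [this, zero_sub, sub_div, div_self (ne_of_gt hdR)]
      rw [hg]
      simp only [hc2, neg_mul]
      nlinarith [mul_le_mul_of_nonneg_left hmono hc1]
    · -- tie: coefficient is 0
      have h1 : φ e = 1/2 := by rw [hφ_eq, if_neg (by omega), if_pos h]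
      have h2 : φ (e + u) = 1/2 := by
        rw [hφ_eq, hkue, if_neg (by omega), if_pos (by omega)]
      have hc1 : φ e - (k e : ℝ) / d = 0 := by
        rw [h1]
        have : (k e : ℝ) / d = 1/2 := by
          rw [div_eq_iff (ne_of_gt hdR)]
          have : (d : ℝ) = 2 * k e := by exact_mod_cast h
          rw [this]; ring
        rw [this]; ring
      have hc2 : φ (e + u) - (k (e + u) : ℝ) / d = 0 := by
        rw [h2, hkue]
        have hkue2 : d - k e = k e := by omega
        rw [hkue2]
        have : (k e : ℝ) / d = 1/2 := by
          rw [div_eq_iff (ne_of_gt hdR)]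
          have : (d : ℝ) = 2 * k e := by exact_mod_cast h
          rw [this]; ring
        rw [this]; ring
      rw [hg]; simp only [hc1, hc2, zero_mul, add_zero]; rfl
    · -- φ e = 0, φ (e+u) = 1
      have h1 : φ e = 0 := by rw [hφ_eq, if_neg (by omega), if_neg (by omega)]
      have h2 : φ (e + u) = 1 := by rw [hφ_eq, hkue, if_pos (by omega)]
      have hmono : F (e + u) ≤ F e := by
        apply hF_mono
        rw [hnorm_u, hnorm]
        omega
      have hc1 : φ e - (k e : ℝ) / d ≤ 0 := by
        rw [h1, zero_sub, neg_nonpos]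
        exact div_nonneg (Nat.cast_nonneg _) (le_of_lt hdR)
      have hc2 : φ (e + u) - (k (e + u) : ℝ) / d = -(φ e - (k e : ℝ) / d) := by
        rw [h1, h2, hkue]
        have : ((d - k e : ℕ) : ℝ) = (d : ℝ) - k e := by
          push_cast [Nat.cast_sub hkd1]; ring
        rw [this, zero_sub, sub_div, div_self (ne_of_gt hdR)]
        ring
      rw [hg]
      simp only [hc2, neg_mul]
      nlinarith [mul_le_mul_of_nonpos_left hmono hc1]
  have hsum_g : ∑ e : Fin n → ZMod 2, g e ≤ 0 := by
    have hreindex : ∑ e : Fin n → ZMod 2, g e = ∑ e : Fin n → ZMod 2, g (e + u) :=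
      (Fintype.sum_equiv (Equiv.addRight u) (fun e => g (e + u)) g (fun e => rfl)).symm
    have h2 : 2 * ∑ e : Fin n → ZMod 2, g e
        = ∑ e : Fin n → ZMod 2, (g e + g (e + u)) := by
      rw [Finset.sum_add_distrib, ← hreindex]; ring
    have h3 : ∑ e : Fin n → ZMod 2, (g e + g (e + u)) ≤ 0 :=
      Finset.sum_nonpos fun e _ => hpair e
    linarith
  -- conclude
  have hdR : (0:ℝ) < d := by exact_mod_cast hd_pos
  have hsplit : ∑ e : Fin n → ZMod 2, φ e * F e
      = (∑ e : Fin n → ZMod 2, g e) + (1 / d) * ∑ e : Fin n → ZMod 2, (k e : ℝ) * F e := by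
    rw [Finset.mul_sum, ← Finset.sum_add_distrib]
    apply Finset.sum_congr rfl
    intro e _
    rw [hg]
    ring
  rw [hsplit, hkF]
  have : (1 / (d:ℝ)) * (d * η) = η := by
    rw [one_div, ← mul_assoc, inv_mul_cancel₀ (ne_of_gt hdR), one_mul]
  rw [this]
  linarith
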